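/- If z0 ∈ (0,1) then V*_𝒰(z0) = [z0, 1), and if z0 ∈ (−1,0) then V*_𝒰(z0) = (−1, z0]. -/

import Mathlib

open Complex Set Filter Topology

noncomputable section

/-- The open unit disc. -/
def uDisc : Set ℂ := {z : ℂ | ‖z‖ < 1}

/-- The holomorphic branch of the square root with `√1 = 1` (principal branch). -/
def csqrt (z : ℂ) : ℂ := z ^ (1/2 : ℂ)

/-- `f` has only real Taylor coefficients at `0`, expressed by the symmetry
`f(conj z) = conj (f z)` on the unit disc. -/
def RealCoeffs (f : ℂ → ℂ) : Prop :=
  ∀ z ∈ uDisc, f ((starRingEnd ℂ) z) = (starRingEnd ℂ) (f z)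

/-- The class `𝒰` of univalent self-maps of the unit disc with `f(0) = 0`,
`f'(0) > 0` and real Taylor coefficients. -/
def ClassU (f : ℂ → ℂ) : Prop :=
  DifferentiableOn ℂ f uDisc ∧ InjOn f uDisc ∧ MapsTo f uDisc uDisc ∧
    f 0 = 0 ∧ 0 < (deriv f 0).re ∧ (deriv f 0).im = 0 ∧ RealCoeffs f

/-- The value range `V_𝒰(z0)`. -/
def VU (z0 : ℂ) : Set ℂ := {w : ℂ | ∃ f : ℂ → ℂ, ClassU f ∧ f z0 = w}

/-- The value range for inverse functions `V*_𝒰(z0)`. -/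
def VUstar (z0 : ℂ) : Set ℂ :=
  {w : ℂ | w ∈ uDisc ∧ ∃ f : ℂ → ℂ, ClassU f ∧ f w = z0}

/-!
A preimage `w` of a real `z0` is real: `f (conj w) = conj z0 = z0`, and `f` is injective. On
`(-1, 1)` the map `f` is real-valued, continuous and injective with `f'(0) > 0`, hence strictly
increasing, so `w` has the sign of `z0`; the Schwarz lemma gives `|z0| ≤ |w|`. Conversely every
such `w` is the preimage of `z0` under the dilation `z ↦ (z0 / w) z`, which lies in `𝒰`.
-/

lemma uDisc_eq_ball : uDisc = Metric.ball (0 : ℂ) 1 := by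
  ext z; simp [uDisc]

lemma ofReal_mem_uDisc_iff {x : ℝ} : (x : ℂ) ∈ uDisc ↔ x ∈ Ioo (-1) 1 := by
  simp [uDisc, abs_lt]

lemma classU_const_mul {c : ℝ} (hc : c ∈ Ioc 0 1) : ClassU (fun z => (c : ℂ) * z) := by
  have hc0 : (c : ℂ) ≠ 0 := by exact_mod_cast hc.1.ne'
  have hderiv : deriv (fun z : ℂ => (c : ℂ) * z) 0 = c := by simp
  refine ⟨(differentiable_id.const_mul _).differentiableOn,
    fun a _ b _ h => mul_left_cancel₀ hc0 h, fun z hz => ?_, mul_zero _, ?_, ?_, fun z _ => ?_⟩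
  · simp only [uDisc, mem_ofPred_eq, norm_mul, Complex.norm_real, Real.norm_eq_abs,
      abs_of_pos hc.1] at hz ⊢
    nlinarith [norm_nonneg z, hc.2]
  · simpa [hderiv] using hc.1
  · simp [hderiv]
  · simp

namespace ClassU

variable {f : ℂ → ℂ} (hf : ClassU f)
include hf

lemma norm_apply_le {w : ℂ} (hw : w ∈ uDisc) : ‖f w‖ ≤ ‖w‖ := by
  obtain ⟨hdiff, -, hmaps, hf0, -⟩ := hf
  rw [uDisc_eq_ball] at hdiff hmaps hw
  exact Complex.norm_le_norm_of_mapsTo_ball hdiff (hmaps.mono_right Metric.ball_subset_closedBall)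
    hf0 (mem_ball_zero_iff.1 hw)

lemma ofReal_re_apply_ofReal {x : ℝ} (hx : x ∈ Ioo (-1) 1) : ((f x).re : ℂ) = f x := by
  obtain ⟨-, -, -, -, -, -, hconj⟩ := hf
  rw [← Complex.conj_eq_iff_re, ← hconj _ (ofReal_mem_uDisc_iff.2 hx), Complex.conj_ofReal]

lemma exists_ofReal_of_apply_eq_ofReal {w : ℂ} {a : ℝ} (hw : w ∈ uDisc) (hfw : f w = a) :
    ∃ x ∈ Ioo (-1 : ℝ) 1, (x : ℂ) = w := by
  obtain ⟨-, hinj, -, -, -, -, hconj⟩ := hf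
  have hw' : (starRingEnd ℂ) w ∈ uDisc := by simpa [uDisc] using hw
  have hw_real : (starRingEnd ℂ) w = w :=
    hinj hw' hw (by rw [hconj w hw, hfw, Complex.conj_ofReal])
  obtain ⟨x, rfl⟩ := Complex.conj_eq_iff_real.1 hw_real
  exact ⟨x, ofReal_mem_uDisc_iff.1 hw, rfl⟩

lemma strictMonoOn_re_apply_ofReal : StrictMonoOn (fun x : ℝ => (f x).re) (Ioo (-1) 1) := by
  have hmaps : MapsTo ((↑) : ℝ → ℂ) (Ioo (-1) 1) uDisc := fun x hx => ofReal_mem_uDisc_iff.2 hx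
  have hcont : ContinuousOn (fun x : ℝ => (f x).re) (Ioo (-1) 1) :=
    Complex.continuous_re.comp_continuousOn
      (hf.1.continuousOn.comp Complex.continuous_ofReal.continuousOn hmaps)
  have hinj : InjOn (fun x : ℝ => (f x).re) (Ioo (-1) 1) := fun x hx y hy hxy => by
    have hfxy : f x = f y := by
      rw [← hf.ofReal_re_apply_ofReal hx, ← hf.ofReal_re_apply_ofReal hy]
      exact congrArg _ hxy
    exact_mod_cast hf.2.1 (hmaps hx) (hmaps hy) hfxy
  refine (hcont.strictMonoOn_of_injOn_Ioo (by norm_num) hinj).resolve_right fun hanti => ?_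
  have hzero : (0 : ℝ) ∈ Ioo (-1) 1 := by norm_num
  have hderiv : HasDerivAt (fun x : ℝ => (f x).re) (deriv f 0).re 0 := by
    have hd := (hf.1.differentiableAt (uDisc_eq_ball ▸ Metric.ball_mem_nhds 0 one_pos)).hasDerivAt
    exact (Complex.ofReal_zero ▸ hd).real_of_complex
  have := hderiv.hasDerivWithinAt.nonpos_of_antitoneOn
    (isOpen_Ioo.uniqueDiffWithinAt (𝕜 := ℝ) hzero).accPt hanti.antitoneOn
  linarith [hf.2.2.2.2.1]

lemma re_apply_ofReal_div_mem_Ioc {x : ℝ} (hx : x ∈ Ioo (-1) 1) (hx0 : x ≠ 0) :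
    (f x).re / x ∈ Ioc 0 1 := by
  have hmono := hf.strictMonoOn_re_apply_ofReal
  have hzero : (0 : ℝ) ∈ Ioo (-1) 1 := by norm_num
  have hf0 : (f (0 : ℝ)).re = 0 := by simp [hf.2.2.2.1]
  have hnorm : |(f x).re| ≤ |x| := by
    have := hf.norm_apply_le (ofReal_mem_uDisc_iff.2 hx)
    rwa [← hf.ofReal_re_apply_ofReal hx, Complex.norm_real, Complex.norm_real] at this
  refine ⟨?_, ?_⟩
  · rcases hx0.lt_or_gt with hneg | hpos
    · exact div_pos_of_neg_of_neg (hf0 ▸ hmono hx hzero hneg) hneg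
    · exact div_pos (hf0 ▸ hmono hzero hx hpos) hpos
  · calc (f x).re / x ≤ |(f x).re / x| := le_abs_self _
      _ = |(f x).re| / |x| := abs_div _ _
      _ ≤ 1 := div_le_one_of_le₀ hnorm (abs_nonneg x)

end ClassU

lemma VUstar_ofReal {z0 : ℝ} (hz0 : z0 ≠ 0) :
    VUstar (z0 : ℂ) = Complex.ofReal '' {x ∈ Ioo (-1) 1 | z0 / x ∈ Ioc 0 1} := by
  ext w
  constructor
  · rintro ⟨hw, f, hf, hfw⟩
    obtain ⟨x, hx, rfl⟩ := hf.exists_ofReal_of_apply_eq_ofReal hw hfw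
    have hx0 : x ≠ 0 := by
      rintro rfl
      have : (z0 : ℂ) = 0 := by rw [← hfw]; simpa using hf.2.2.2.1
      exact hz0 (by exact_mod_cast this)
    have hre : (f x).re = z0 := by simp [hfw]
    exact ⟨x, ⟨hx, hre ▸ hf.re_apply_ofReal_div_mem_Ioc hx hx0⟩, rfl⟩
  · rintro ⟨x, ⟨hx, hc⟩, rfl⟩
    have hx0 : x ≠ 0 := by
      rintro rfl
      simp at hc
    refine ⟨ofReal_mem_uDisc_iff.2 hx, _, classU_const_mul hc, ?_⟩
    simp only [← Complex.ofReal_mul, div_mul_cancel₀ _ hx0]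

lemma sep_div_mem_Ioc_of_pos {a : ℝ} (ha : 0 < a) :
    {x ∈ Ioo (-1) 1 | a / x ∈ Ioc 0 1} = Ico a 1 := by
  ext x
  simp only [mem_Ioo, mem_Ioc, mem_Ico]
  constructor
  · rintro ⟨⟨-, hx1⟩, hpos, hle⟩
    have hx : 0 < x := (div_pos_iff_of_pos_left ha).1 hpos
    exact ⟨(div_le_one hx).1 hle, hx1⟩
  · rintro ⟨hax, hx1⟩
    have hx : 0 < x := ha.trans_le hax
    exact ⟨⟨by linarith, hx1⟩, div_pos ha hx, (div_le_one hx).2 hax⟩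

lemma sep_div_mem_Ioc_of_neg {a : ℝ} (ha : a < 0) :
    {x ∈ Ioo (-1) 1 | a / x ∈ Ioc 0 1} = Ioc (-1) a := by
  ext x
  simp only [mem_Ioo, mem_Ioc]
  constructor
  · rintro ⟨⟨hx1, -⟩, hpos, hle⟩
    have hx : x < 0 := lt_of_not_ge fun h => (div_nonpos_of_nonpos_of_nonneg ha.le h).not_gt hpos
    exact ⟨hx1, (div_le_one_of_neg hx).1 hle⟩
  · rintro ⟨hx1, hxa⟩
    have hx : x < 0 := hxa.trans_lt ha
    exact ⟨⟨hx1, by linarith⟩, div_pos_of_neg_of_neg ha hx, (div_le_one_of_neg hx).2 hxa⟩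

theorem valueRange_inv_ClassU_real_general (z0 : ℝ) :
    (0 < z0 → VUstar (z0 : ℂ) = Complex.ofReal '' Ico z0 1) ∧
    (z0 < 0 → VUstar (z0 : ℂ) = Complex.ofReal '' Ioc (-1) z0) :=
  ⟨fun hz => by rw [VUstar_ofReal hz.ne', sep_div_mem_Ioc_of_pos hz],
    fun hz => by rw [VUstar_ofReal hz.ne, sep_div_mem_Ioc_of_neg hz]⟩

theorem valueRange_inv_ClassU_real (z0 : ℝ) (h1 : -1 < z0) (h2 : z0 < 1) (h0 : z0 ≠ 0) :
    (0 < z0 → VUstar (z0 : ℂ) = Complex.ofReal '' Ico z0 1) ∧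
    (z0 < 0 → VUstar (z0 : ℂ) = Complex.ofReal '' Ioc (-1) z0) :=
  valueRange_inv_ClassU_real_general z0
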